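/- arXiv:2506.02984 — 3 statements merged into one kernel-verified Lean document; each statement's English description precedes it below -/
import Mathlib

section
/- For n = 1 every iterated function system of the considered form is topologically contractive: if A_0, …, A_{m−1} ∈ Σ (with m ≥ 1) are matrices none of which is a permutation matrix, then for every sequence a ∈ {0,…,m−1}^ℕ the intersection over t ≥ 0 of the sets (A_{a_0} A_{a_1} ⋯ A_{a_{t−1}})[Δ] is a singleton. -/
/-!
For `A ∈ Σ` with column sums `c₀, c₁`, the image `A[Δ]` is the segment between the normalized
columns of `A`, of width `|det A| / (c₀ c₁) = 1 / (c₀ c₁)` in the first coordinate. Multiplying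
on the right by a matrix of `Σ` that is not a permutation matrix raises the sum of all entries
by at least one, so the product `P` of the first `t` matrices has `c₀ + c₁ ≥ t + 2` and hence
`c₀ c₁ ≥ c₀ + c₁ - 1 ≥ t + 1`. The sets `P[Δ]` are nested nonempty compacta whose widths tend to
zero, so they meet in exactly one point.
-/

open Matrix

abbrev MatZ (n : ℕ) : Type := Matrix (Fin (n + 1)) (Fin (n + 1)) ℤ

def inSigma {n : ℕ} (A : MatZ n) : Prop :=
  IsUnit A.det ∧ ∀ i j, 0 ≤ A i j

def IsPermMat {n : ℕ} (A : MatZ n) : Prop :=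
  ∃ σ : Equiv.Perm (Fin (n + 1)), ∀ i j, A i j = if i = σ j then 1 else 0

noncomputable def toR {n : ℕ} (A : MatZ n) : Matrix (Fin (n + 1)) (Fin (n + 1)) ℝ :=
  A.map ((↑) : ℤ → ℝ)

noncomputable def projAct {n : ℕ} (A : Matrix (Fin (n + 1)) (Fin (n + 1)) ℝ)
    (x : Fin (n + 1) → ℝ) : Fin (n + 1) → ℝ :=
  (∑ i, (A *ᵥ x) i)⁻¹ • (A *ᵥ x)

noncomputable def simg {n : ℕ} (A : MatZ n) : Set (Fin (n + 1) → ℝ) :=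
  projAct (toR A) '' stdSimplex ℝ (Fin (n + 1))

def wordProd {n : ℕ} (A0 A1 : MatZ n) (w : List Bool) : MatZ n :=
  (w.map (fun b => bif b then A1 else A0)).prod

def Contractive {n : ℕ} (A0 A1 : MatZ n) : Prop :=
  ∀ a : ℕ → Bool, ∃ p,
    (⋂ t : ℕ, simg (wordProd A0 A1 ((List.range t).map a))) = {p}

def Nmat (n : ℕ) : MatZ n :=
  Matrix.of fun i j => if i = j then 1 else if j = 1 ∧ i = 0 then 1 else 0

def Fmat (n : ℕ) : MatZ n :=
  Matrix.of fun i j => if i = Equiv.swap (0 : Fin (n + 1)) 1 j then 1 else 0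

def Rmat (n : ℕ) : MatZ n :=
  Matrix.of fun i j => if i = j + 1 then 1 else 0

def Lmat (n : ℕ) : MatZ n := Fmat n * Nmat n * Fmat n

def Mon0 (n : ℕ) : MatZ n := Nmat n * Fmat n * Rmat n

def Mon1 (n : ℕ) : MatZ n := Lmat n * Rmat n

def permMat {n : ℕ} (σ : Equiv.Perm (Fin (n + 1))) : MatZ n :=
  Matrix.of fun i j => if i = σ j then 1 else 0

open Finset

section Sigma

variable {n : ℕ}

def colSum (A : MatZ n) (j : Fin (n + 1)) : ℤ := ∑ i, A i j

def rowSum (A : MatZ n) (i : Fin (n + 1)) : ℤ := ∑ j, A i j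

def entrySum (A : MatZ n) : ℤ := ∑ i, ∑ j, A i j

theorem inSigma_one : inSigma (1 : MatZ n) :=
  ⟨by simp, fun i j => by by_cases h : i = j <;> simp [Matrix.one_apply, h]⟩

theorem inSigma.mul {A B : MatZ n} (hA : inSigma A) (hB : inSigma B) : inSigma (A * B) :=
  ⟨by rw [Matrix.det_mul]; exact hA.1.mul hB.1,
    fun i j => by
      rw [Matrix.mul_apply]; exact sum_nonneg fun k _ => mul_nonneg (hA.2 i k) (hB.2 k j)⟩

theorem inSigma_list_prod {l : List (MatZ n)} (h : ∀ A ∈ l, inSigma A) : inSigma l.prod := by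
  induction l with
  | nil => exact inSigma_one
  | cons A l ih =>
    rw [List.prod_cons]
    exact (h A List.mem_cons_self).mul (ih fun B hB => h B (List.mem_cons_of_mem A hB))

theorem inSigma.one_le_colSum {A : MatZ n} (hA : inSigma A) (j : Fin (n + 1)) :
    1 ≤ colSum A j := by
  by_contra! h
  have hzero : ∀ i, A i j = 0 := by
    have hsum : colSum A j = 0 := le_antisymm (by omega) (sum_nonneg fun i _ => hA.2 i j)
    exact fun i => (sum_eq_zero_iff_of_nonneg fun i _ => hA.2 i j).1 hsum i (mem_univ i)
  exact not_isUnit_zero (det_eq_zero_of_column_eq_zero j hzero ▸ hA.1)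

theorem inSigma.one_le_rowSum {A : MatZ n} (hA : inSigma A) (i : Fin (n + 1)) :
    1 ≤ rowSum A i := by
  by_contra! h
  have hzero : ∀ j, A i j = 0 := by
    have hsum : rowSum A i = 0 := le_antisymm (by omega) (sum_nonneg fun j _ => hA.2 i j)
    exact fun j => (sum_eq_zero_iff_of_nonneg fun j _ => hA.2 i j).1 hsum j (mem_univ j)
  exact not_isUnit_zero (det_eq_zero_of_row_eq_zero i hzero ▸ hA.1)

theorem entrySum_mul (A B : MatZ n) : entrySum (A * B) = ∑ k, colSum A k * rowSum B k := by
  calc entrySum (A * B) = ∑ i, ∑ k, ∑ j, A i k * B k j :=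
        sum_congr rfl fun i _ => by simp only [Matrix.mul_apply]; exact sum_comm
    _ = ∑ k, ∑ i, ∑ j, A i k * B k j := sum_comm
    _ = ∑ k, colSum A k * rowSum B k := by simp only [colSum, rowSum, sum_mul_sum]

/-- Since `entrySum (A * B) = ∑ₖ cₖ rₖ`, this is `∑ₖ (cₖ - 1) (rₖ - 1) ≥ 0`. -/
theorem entrySum_add_entrySum_le {A B : MatZ n} (hA : ∀ k, 1 ≤ colSum A k)
    (hB : ∀ k, 1 ≤ rowSum B k) : entrySum A + entrySum B ≤ entrySum (A * B) + (n + 1) := by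
  have hAsum : entrySum A = ∑ k, colSum A k := sum_comm
  have hterm : ∀ k, colSum A k + rowSum B k ≤ colSum A k * rowSum B k + 1 := fun k => by
    nlinarith [mul_nonneg (sub_nonneg.2 (hA k)) (sub_nonneg.2 (hB k))]
  have := sum_le_sum fun k (_ : k ∈ univ) => hterm k
  simp only [sum_add_distrib, sum_const, card_univ, Fintype.card_fin, nsmul_eq_mul] at this
  have hBsum : entrySum B = ∑ k, rowSum B k := rfl
  rw [hAsum, hBsum, entrySum_mul]
  push_cast at this
  linarith

end Sigma

theorem three_le_entrySum {A : MatZ 1} (hA : inSigma A) (hnp : ¬ IsPermMat A) :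
    3 ≤ entrySum A := by
  by_contra! h
  have c0 := hA.one_le_colSum 0
  have c1 := hA.one_le_colSum 1
  have r0 := hA.one_le_rowSum 0
  have r1 := hA.one_le_rowSum 1
  simp only [entrySum, colSum, rowSum, Fin.sum_univ_succ, Fin.sum_univ_zero,
    Fin.succ_zero_eq_one, add_zero] at h c0 c1 r0 r1
  have := hA.2 0 0; have := hA.2 0 1; have := hA.2 1 0; have := hA.2 1 1
  have hcases : (A 0 0 = 1 ∧ A 0 1 = 0 ∧ A 1 0 = 0 ∧ A 1 1 = 1) ∨
      (A 0 0 = 0 ∧ A 0 1 = 1 ∧ A 1 0 = 1 ∧ A 1 1 = 0) := by omega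
  apply hnp
  rcases hcases with ⟨e00, e01, e10, e11⟩ | ⟨e00, e01, e10, e11⟩
  · exact ⟨1, fun i j => by fin_cases i <;> fin_cases j <;> simp [e00, e01, e10, e11]⟩
  · exact ⟨Equiv.swap 0 1, fun i j => by
      fin_cases i <;> fin_cases j <;> simp [e00, e01, e10, e11]⟩

theorem add_two_le_entrySum_prod {l : List (MatZ 1)}
    (h : ∀ A ∈ l, inSigma A ∧ ¬ IsPermMat A) : (l.length : ℤ) + 2 ≤ entrySum l.prod := by
  induction l with
  | nil => simp [entrySum, Fin.sum_univ_two]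
  | cons A l ih =>
    have hA := h A List.mem_cons_self
    have hl : ∀ B ∈ l, inSigma B ∧ ¬ IsPermMat B := fun B hB => h B (List.mem_cons_of_mem A hB)
    have hprod := inSigma_list_prod fun B hB => (hl B hB).1
    have := entrySum_add_entrySum_le hA.1.one_le_colSum hprod.one_le_rowSum
    have := three_le_entrySum hA.1 hA.2
    have := ih hl
    rw [List.prod_cons, List.length_cons]
    push_cast at *
    linarith

theorem entrySum_sub_one_le_colSum_mul {A : MatZ 1} (hA : inSigma A) :
    entrySum A - 1 ≤ colSum A 0 * colSum A 1 := by
  have hsum : entrySum A = colSum A 0 + colSum A 1 := by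
    simp only [entrySum, colSum, Fin.sum_univ_succ, Fin.sum_univ_zero, Fin.succ_zero_eq_one,
      add_zero]
    ring
  nlinarith [mul_nonneg (sub_nonneg.2 (hA.one_le_colSum 0)) (sub_nonneg.2 (hA.one_le_colSum 1))]

section Projective

variable {n : ℕ}

theorem sum_toR_mulVec (A : MatZ n) (x : Fin (n + 1) → ℝ) :
    ∑ i, (toR A *ᵥ x) i = ∑ j, (colSum A j : ℝ) * x j := by
  simp only [toR, Matrix.mulVec, dotProduct, Matrix.map_apply, colSum, Int.cast_sum, sum_mul]
  exact sum_comm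

theorem inSigma.one_le_sum_toR_mulVec {A : MatZ n} (hA : inSigma A) {x : Fin (n + 1) → ℝ}
    (hx : x ∈ stdSimplex ℝ (Fin (n + 1))) : 1 ≤ ∑ i, (toR A *ᵥ x) i := by
  rw [sum_toR_mulVec, ← hx.2]
  exact sum_le_sum fun j _ =>
    le_mul_of_one_le_left (hx.1 j) (by exact_mod_cast hA.one_le_colSum j)

theorem inSigma.projAct_mem_stdSimplex {A : MatZ n} (hA : inSigma A) {x : Fin (n + 1) → ℝ}
    (hx : x ∈ stdSimplex ℝ (Fin (n + 1))) :
    projAct (toR A) x ∈ stdSimplex ℝ (Fin (n + 1)) := by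
  have hS := hA.one_le_sum_toR_mulVec hx
  refine ⟨fun i => mul_nonneg (by positivity) ?_, ?_⟩
  · simp only [toR, Matrix.mulVec, dotProduct, Matrix.map_apply]
    exact sum_nonneg fun j _ => mul_nonneg (by exact_mod_cast hA.2 i j) (hx.1 j)
  · simp only [projAct, Pi.smul_apply, smul_eq_mul, ← mul_sum]
    exact inv_mul_cancel₀ (by positivity)

theorem projAct_smul (M : Matrix (Fin (n + 1)) (Fin (n + 1)) ℝ) {c : ℝ} (hc : c ≠ 0)
    (x : Fin (n + 1) → ℝ) : projAct M (c • x) = projAct M x := by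
  simp only [projAct, Matrix.mulVec_smul, Pi.smul_apply, smul_eq_mul, ← mul_sum, mul_inv,
    smul_smul]
  rw [mul_right_comm, inv_mul_cancel₀ hc, one_mul]

theorem projAct_projAct (M N : Matrix (Fin (n + 1)) (Fin (n + 1)) ℝ) {x : Fin (n + 1) → ℝ}
    (hx : ∑ i, (N *ᵥ x) i ≠ 0) : projAct M (projAct N x) = projAct (M * N) x := by
  change projAct M ((∑ i, (N *ᵥ x) i)⁻¹ • (N *ᵥ x)) = _
  rw [projAct_smul M (inv_ne_zero hx)]
  simp only [projAct, Matrix.mulVec_mulVec]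

theorem toR_mul (A B : MatZ n) : toR (A * B) = toR A * toR B :=
  Matrix.map_mul (f := Int.castRingHom ℝ)

theorem simg_mul_subset (A : MatZ n) {B : MatZ n} (hB : inSigma B) : simg (A * B) ⊆ simg A := by
  rintro _ ⟨x, hx, rfl⟩
  have hS := hB.one_le_sum_toR_mulVec hx
  exact ⟨_, hB.projAct_mem_stdSimplex hx, by rw [projAct_projAct _ _ (by positivity), toR_mul]⟩

theorem simg_nonempty (A : MatZ n) : (simg A).Nonempty :=
  ⟨_, _, single_mem_stdSimplex ℝ 0, rfl⟩

theorem inSigma.isCompact_simg {A : MatZ n} (hA : inSigma A) : IsCompact (simg A) := by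
  refine (isCompact_stdSimplex ℝ _).image_of_continuousOn
    (ContinuousOn.smul (f := fun x => (∑ i, (toR A *ᵥ x) i)⁻¹) (g := (toR A *ᵥ ·)) ?_ ?_)
  · refine (continuous_finsetSum _ fun i _ => ?_).continuousOn.inv₀ fun x hx => ?_
    · exact (continuous_apply i).comp (continuous_const.matrix_mulVec continuous_id)
    · exact (zero_lt_one.trans_le (hA.one_le_sum_toR_mulVec hx)).ne'
  · exact (continuous_const.matrix_mulVec continuous_id).continuousOn

end Projective

theorem add_eq_one_of_mem_stdSimplex_two {x : Fin 2 → ℝ} (hx : x ∈ stdSimplex ℝ (Fin 2)) :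
    x 0 + x 1 = 1 := by
  simpa [Fin.sum_univ_two] using hx.2

theorem inSigma.abs_projAct_sub_le {A : MatZ 1} (hA : inSigma A) {x y : Fin 2 → ℝ}
    (hx : x ∈ stdSimplex ℝ (Fin 2)) (hy : y ∈ stdSimplex ℝ (Fin 2)) :
    |projAct (toR A) x 0 - projAct (toR A) y 0| ≤ 1 / ((colSum A 0 : ℝ) * colSum A 1) := by
  have hSx := hA.one_le_sum_toR_mulVec hx
  have hSy := hA.one_le_sum_toR_mulVec hy
  have hc0 : (1 : ℝ) ≤ colSum A 0 := by exact_mod_cast hA.one_le_colSum 0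
  have hc1 : (1 : ℝ) ≤ colSum A 1 := by exact_mod_cast hA.one_le_colSum 1
  have hdet : |(A 0 0 : ℝ) * A 1 1 - A 0 1 * A 1 0| = 1 := by
    have := Int.isUnit_iff_abs_eq.1 hA.1
    rw [Matrix.det_fin_two] at this
    exact_mod_cast this
  have hproj : ∀ z,
      projAct (toR A) z 0 = ((A 0 0 : ℝ) * z 0 + A 0 1 * z 1) / ∑ i, (toR A *ᵥ z) i := fun z => by
    simp [projAct, toR, Matrix.mulVec, dotProduct, Fin.sum_univ_succ, div_eq_inv_mul]
  have hsum : ∀ z, ∑ i, (toR A *ᵥ z) i = (colSum A 0 : ℝ) * z 0 + colSum A 1 * z 1 :=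
    fun z => by rw [sum_toR_mulVec]; simp [Fin.sum_univ_succ]
  have hc : (colSum A 0 : ℝ) = A 0 0 + A 1 0 ∧ (colSum A 1 : ℝ) = A 0 1 + A 1 1 := by
    simp [colSum, Fin.sum_univ_succ]
  have hdiff : projAct (toR A) x 0 - projAct (toR A) y 0 =
      ((A 0 0 : ℝ) * A 1 1 - A 0 1 * A 1 0) * (x 0 * y 1 - x 1 * y 0) /
        ((∑ i, (toR A *ᵥ x) i) * ∑ i, (toR A *ᵥ y) i) := by
    rw [hproj, hproj, div_sub_div _ _ (by positivity) (by positivity), hsum, hsum, hc.1, hc.2]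
    ring
  have hcross : |x 0 * y 1 - x 1 * y 0| * ((colSum A 0 : ℝ) * colSum A 1) ≤
      (∑ i, (toR A *ᵥ x) i) * ∑ i, (toR A *ᵥ y) i := by
    have h0 := hx.1 0; have h1 := hx.1 1; have h2 := hy.1 0; have h3 := hy.1 1
    have habs : |x 0 * y 1 - x 1 * y 0| ≤ x 0 * y 1 + x 1 * y 0 :=
      abs_le.2 ⟨by nlinarith [mul_nonneg h1 h2], by nlinarith [mul_nonneg h0 h3]⟩
    rw [hsum, hsum]
    nlinarith [mul_nonneg (mul_nonneg h0 h2) (sq_nonneg (colSum A 0 : ℝ)),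
      mul_nonneg (mul_nonneg h1 h3) (sq_nonneg (colSum A 1 : ℝ)),
      mul_le_mul_of_nonneg_right habs (by positivity : (0 : ℝ) ≤ colSum A 0 * colSum A 1)]
  have hSxy : 0 < (∑ i, (toR A *ᵥ x) i) * ∑ i, (toR A *ᵥ y) i := by positivity
  rw [hdiff, abs_div, abs_mul, hdet, one_mul, abs_of_pos hSxy,
    div_le_div_iff₀ hSxy (by positivity)]
  linarith

theorem dist_le_abs_sub_of_mem_stdSimplex_two {x y : Fin 2 → ℝ}
    (hx : x ∈ stdSimplex ℝ (Fin 2)) (hy : y ∈ stdSimplex ℝ (Fin 2)) :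
    dist x y ≤ |x 0 - y 0| := by
  have hx01 := add_eq_one_of_mem_stdSimplex_two hx
  have hy01 := add_eq_one_of_mem_stdSimplex_two hy
  refine (dist_pi_le_iff (abs_nonneg _)).2 (Fin.forall_fin_two.2 ⟨?_, ?_⟩)
  · exact (Real.dist_eq _ _).le
  · rw [Real.dist_eq, show x 1 - y 1 = -(x 0 - y 0) by linarith, abs_neg]

theorem inSigma.dist_le_of_mem_simg {A : MatZ 1} (hA : inSigma A) {p q : Fin 2 → ℝ}
    (hp : p ∈ simg A) (hq : q ∈ simg A) : dist p q ≤ 1 / ((colSum A 0 : ℝ) * colSum A 1) := by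
  obtain ⟨x, hx, rfl⟩ := hp
  obtain ⟨y, hy, rfl⟩ := hq
  exact (dist_le_abs_sub_of_mem_stdSimplex_two (hA.projAct_mem_stdSimplex hx)
    (hA.projAct_mem_stdSimplex hy)).trans (hA.abs_projAct_sub_le hx hy)

theorem exists_iInter_eq_singleton_of_dist_le {X : Type*} [MetricSpace X] {K : ℕ → Set X}
    (hmono : ∀ t, K (t + 1) ⊆ K t) (hne : ∀ t, (K t).Nonempty) (hK : ∀ t, IsCompact (K t))
    (hdist : ∀ ε > 0, ∃ t, ∀ x ∈ K t, ∀ y ∈ K t, dist x y ≤ ε) : ∃ p, ⋂ t, K t = {p} := by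
  obtain ⟨p, hp⟩ := IsCompact.nonempty_iInter_of_sequence_nonempty_isCompact_isClosed K hmono hne
    (hK 0) fun t => (hK t).isClosed
  refine ⟨p, Set.eq_singleton_iff_unique_mem.2 ⟨hp, fun q hq => eq_of_forall_dist_le ?_⟩⟩
  intro ε hε
  obtain ⟨t, ht⟩ := hdist ε hε
  exact ht q (Set.mem_iInter.1 hq t) p (Set.mem_iInter.1 hp t)

theorem stmt2_general (m : ℕ) (A : Fin m → MatZ 1)
    (hA : ∀ k, inSigma (A k)) (hnp : ∀ k, ¬ IsPermMat (A k))
    (a : ℕ → Fin m) :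
    ∃ p, (⋂ t : ℕ, simg (((List.range t).map (fun s => A (a s))).prod)) = {p} := by
  set P : ℕ → MatZ 1 := fun t => ((List.range t).map (fun s => A (a s))).prod
  have hP : ∀ t, inSigma (P t) := fun t =>
    inSigma_list_prod fun B hB => by obtain ⟨s, -, rfl⟩ := List.mem_map.1 hB; exact hA _
  have hsucc : ∀ t, P (t + 1) = P t * A (a t) := fun t => by
    simp [P, List.range_succ]
  have hwidth : ∀ t : ℕ, (t : ℝ) + 1 ≤ (colSum (P t) 0 : ℝ) * colSum (P t) 1 := fun t => by
    have hlen := add_two_le_entrySum_prod (l := (List.range t).map (fun s => A (a s)))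
      fun B hB => by obtain ⟨s, -, rfl⟩ := List.mem_map.1 hB; exact ⟨hA _, hnp _⟩
    have := entrySum_sub_one_le_colSum_mul (hP t)
    simp only [List.length_map, List.length_range] at hlen
    exact_mod_cast (by linarith : (t : ℤ) + 1 ≤ colSum (P t) 0 * colSum (P t) 1)
  refine exists_iInter_eq_singleton_of_dist_le (fun t => ?_) (fun t => simg_nonempty _)
    (fun t => (hP t).isCompact_simg) fun ε hε => ?_
  · change simg (P (t + 1)) ⊆ simg (P t)
    rw [hsucc]
    exact simg_mul_subset _ (hA _)
  · obtain ⟨t, ht⟩ := exists_nat_one_div_lt hε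
    refine ⟨t, fun x hx y hy => ((hP t).dist_le_of_mem_simg hx hy).trans ?_⟩
    calc 1 / ((colSum (P t) 0 : ℝ) * colSum (P t) 1) ≤ 1 / ((t : ℝ) + 1) :=
          one_div_le_one_div_of_le (by positivity) (hwidth t)
      _ ≤ ε := ht.le

theorem stmt2 (m : ℕ) (hm : 1 ≤ m) (A : Fin m → MatZ 1)
    (hA : ∀ k, inSigma (A k)) (hnp : ∀ k, ¬ IsPermMat (A k))
    (a : ℕ → Fin m) :
    ∃ p, (⋂ t : ℕ, simg (((List.range t).map (fun s => A (a s))).prod)) = {p} :=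
  stmt2_general m A hA hnp a
end

section
/- The characteristic polynomial of the Mönkemeyer matrix M_0 = NFR is (x − 1)(x^n − 1), and the characteristic polynomial of M_1 = LR is x^{n+1} − x − 1. -/
/-
`M₁` sends `e_j ↦ e_{j+1}` for `j < n` and `e_n ↦ e_0 + e_1`, so it is the companion matrix
of `x^{n+1} - x - 1`. `M₀` fixes `e_0`, and on `ℤ^{n+1}/ℤe_0` it cyclically shifts
`e_1, …, e_n`, i.e. acts as the companion matrix of `x^n - 1`. The characteristic polynomial
of a companion matrix is read off by expanding along the first row, by induction on the size.
-/

open Matrix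

open Polynomial

namespace Matrix

variable {R : Type*}

section Companion

variable [Zero R] [One R]

-- The subdiagonal test is on `ℕ` values: `j + 1` in `Fin` would wrap around.
def companion {m : ℕ} (c : Fin (m + 1) → R) : Matrix (Fin (m + 1)) (Fin (m + 1)) R :=
  of fun i j => if j = Fin.last m then c i else if (i : ℕ) = j + 1 then 1 else 0

theorem companion_apply_last {m : ℕ} (c : Fin (m + 1) → R) (i : Fin (m + 1)) :
    companion c i (Fin.last m) = c i :=
  if_pos rfl

theorem companion_apply_castSucc {m : ℕ} (c : Fin (m + 1) → R) (i : Fin (m + 1)) (k : Fin m) :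
    companion c i k.castSucc = if i = k.succ then 1 else 0 := by
  rw [companion, of_apply, if_neg (Fin.castSucc_lt_last k).ne]
  simp [Fin.ext_iff]

theorem companion_submatrix_succ {m : ℕ} (c : Fin (m + 2) → R) :
    (companion c).submatrix Fin.succ Fin.succ = companion (Fin.tail c) := by
  ext i j
  simp [companion, Fin.tail]

end Companion

variable [CommRing R]

theorem charmatrix_submatrix {n p : Type*} [Fintype n] [DecidableEq n] [Fintype p] [DecidableEq p]
    (M : Matrix n n R) {e : p → n} (he : Function.Injective e) :
    charmatrix (M.submatrix e e) = (charmatrix M).submatrix e e := by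
  ext i j
  rcases eq_or_ne i j with rfl | h
  · simp
  · simp [h, he.ne h]

theorem det_charmatrix_companion_submatrix_succ_castSucc {m : ℕ} (c : Fin (m + 2) → R) :
    ((charmatrix (companion c)).submatrix Fin.succ Fin.castSucc).det = (-1) ^ (m + 1) := by
  have hupper : ((charmatrix (companion c)).submatrix Fin.succ Fin.castSucc).IsUpperTriangular := by
    intro i j (hji : j < i)
    rw [Fin.lt_def] at hji
    have hij : Fin.succ i ≠ Fin.castSucc j := by simp [Fin.ext_iff]; omega
    rw [submatrix_apply, charmatrix_apply_ne _ _ _ hij]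
    simp [companion, Fin.ext_iff, j.isLt.ne, hji.ne']
  have hdiag (i : Fin (m + 1)) : charmatrix (companion c) i.succ i.castSucc = -1 := by
    rw [charmatrix_apply_ne _ _ _ Fin.castSucc_lt_succ.ne']
    simp [companion, Fin.ext_iff, i.isLt.ne]
  simp [det_of_isUpperTriangular hupper, hdiag]

theorem charpoly_companion {m : ℕ} (c : Fin (m + 1) → R) :
    (companion c).charpoly = X ^ (m + 1) - ∑ i, C (c i) * X ^ (i : ℕ) := by
  induction m with
  | zero => simp [charpoly, det_unique, companion, charmatrix_apply_eq]
  | succ m ih =>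
    rw [charpoly, det_succ_row_zero, Fintype.sum_eq_add 0 (Fin.last _) (by simp [Fin.ext_iff])]
    · rw [Fin.succAbove_zero, Fin.succAbove_last,
        ← charmatrix_submatrix _ (Fin.succ_injective _), companion_submatrix_succ, ← charpoly,
        ih, det_charmatrix_companion_submatrix_succ_castSucc]
      have hsign : ((-1 : R[X]) ^ (m + 1)) * (-1) ^ (m + 1) = 1 := by rw [← mul_pow]; simp
      have hshift : X * ∑ i : Fin (m + 1), C (Fin.tail c i) * X ^ (i : ℕ) =
          ∑ i : Fin (m + 1), C (c i.succ) * X ^ (i.succ : ℕ) := by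
        simp only [Finset.mul_sum, Fin.tail, Fin.val_succ, pow_succ]
        ring_nf
      have h00 : charmatrix (companion c) 0 0 = X := by
        simp [charmatrix_apply_eq, companion, Fin.ext_iff]
      have h0l : charmatrix (companion c) 0 (Fin.last _) = -C (c 0) := by
        rw [charmatrix_apply_ne _ _ _ (by simp [Fin.ext_iff])]
        simp [companion]
      rw [h00, h0l, Fin.sum_univ_succ (n := m + 1)]
      simp only [Fin.val_zero, Fin.val_last, pow_zero, one_mul]
      linear_combination -(C (c 0)) * hsign - hshift
    · rintro j ⟨h0, hl⟩
      simp [charmatrix_apply_ne _ _ _ (Ne.symm h0), companion, hl]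

theorem charpoly_eq_X_sub_C_mul_charpoly_submatrix_succ {m : ℕ}
    (A : Matrix (Fin (m + 1)) (Fin (m + 1)) R) (h : ∀ i, i ≠ 0 → A i 0 = 0) :
    A.charpoly = (X - C (A 0 0)) * (A.submatrix Fin.succ Fin.succ).charpoly := by
  rw [charpoly, det_succ_column_zero, Fintype.sum_eq_single 0, Fin.succAbove_zero,
    ← charmatrix_submatrix _ (Fin.succ_injective _)]
  · simp [charmatrix_apply_eq, charpoly]
  · intro i hi
    simp [charmatrix_apply_ne _ _ _ hi, h i hi]

end Matrix

theorem mul_Rmat_apply {n : ℕ} (A : MatZ n) (i j : Fin (n + 1)) :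
    (A * Rmat n) i j = A i (j + 1) := by
  simp [Rmat, mul_apply]

theorem mul_Fmat_apply {n : ℕ} (A : MatZ n) (i j : Fin (n + 1)) :
    (A * Fmat n) i j = A i (Equiv.swap 0 1 j) := by
  simp [Fmat, mul_apply]

theorem Fmat_mul_apply {n : ℕ} (A : MatZ n) (i j : Fin (n + 1)) :
    (Fmat n * A) i j = A (Equiv.swap 0 1 i) j := by
  simp only [Fmat, mul_apply, of_apply, ite_mul, one_mul, zero_mul, eq_comm (a := i),
    Equiv.swap_apply_eq_iff, Finset.sum_ite_eq', Finset.mem_univ, if_true]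

theorem Lmat_apply {n : ℕ} (i j : Fin (n + 1)) :
    Lmat n i j = if i = j then 1 else if i = 1 ∧ j = 0 then 1 else 0 := by
  rw [Lmat, mul_Fmat_apply, Fmat_mul_apply]
  simp only [Nmat, of_apply, Equiv.apply_eq_iff_eq, Equiv.swap_apply_eq_iff, Equiv.swap_apply_left,
    Equiv.swap_apply_right, and_comm]

theorem Nmat_apply_of_ne_zero {n : ℕ} {i : Fin (n + 1)} (hi : i ≠ 0) (j : Fin (n + 1)) :
    Nmat n i j = if i = j then 1 else 0 := by
  simp [Nmat, hi]

theorem Mon0_apply {n : ℕ} (i j : Fin (n + 1)) :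
    Mon0 n i j = Nmat n i (Equiv.swap 0 1 (j + 1)) := by
  rw [Mon0, mul_Rmat_apply, mul_Fmat_apply]

theorem Mon1_apply {n : ℕ} (i j : Fin (n + 1)) : Mon1 n i j = Lmat n i (j + 1) :=
  mul_Rmat_apply _ i j

theorem Mon1_eq_companion (m : ℕ) :
    Mon1 (m + 1) = companion (Pi.single 0 1 + Pi.single 1 1) := by
  ext i j
  rw [Mon1_apply, Lmat_apply]
  rcases Fin.eq_castSucc_or_eq_last j with ⟨k, rfl⟩ | rfl
  · simp [Fin.coeSucc_eq_succ, companion_apply_castSucc, Fin.succ_ne_zero]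
  · rw [Fin.last_add_one, companion_apply_last]
    rcases eq_or_ne i 0 with rfl | hi
    · simp
    · simp [hi, Pi.single_apply]

theorem Mon0_apply_zero_right (m : ℕ) (i : Fin (m + 2)) :
    Mon0 (m + 1) i 0 = if i = 0 then 1 else 0 := by
  rw [Mon0_apply, zero_add, Equiv.swap_apply_right]
  simp [Nmat]

theorem Mon0_submatrix_succ (m : ℕ) :
    (Mon0 (m + 1)).submatrix Fin.succ Fin.succ = companion (Pi.single 0 1) := by
  ext i j
  rw [submatrix_apply, Mon0_apply, Nmat_apply_of_ne_zero (Fin.succ_ne_zero i)]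
  rcases Fin.eq_castSucc_or_eq_last j with ⟨k, rfl⟩ | rfl
  · have h1 : k.succ.succ ≠ 1 := by
      rw [← Fin.succ_zero_eq_one, Ne, Fin.succ_inj]; exact Fin.succ_ne_zero k
    rw [Fin.succ_castSucc, Fin.coeSucc_eq_succ,
      Equiv.swap_apply_of_ne_of_ne (Fin.succ_ne_zero _) h1]
    simp [companion_apply_castSucc]
  · rw [Fin.succ_last, Fin.last_add_one, Equiv.swap_apply_left, ← Fin.succ_zero_eq_one]
    simp only [Fin.succ_inj, companion_apply_last, Pi.single_apply]

theorem stmt17 (n : ℕ) (hn : 1 ≤ n) :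
    (Mon0 n).charpoly = (Polynomial.X - 1) * (Polynomial.X ^ n - 1) ∧
    (Mon1 n).charpoly = Polynomial.X ^ (n + 1) - Polynomial.X - 1 := by
  obtain ⟨m, rfl⟩ : ∃ m, n = m + 1 := ⟨n - 1, by omega⟩
  constructor
  · rw [charpoly_eq_X_sub_C_mul_charpoly_submatrix_succ _
      (fun i hi => by rw [Mon0_apply_zero_right, if_neg hi]),
      Mon0_apply_zero_right, Mon0_submatrix_succ, charpoly_companion]
    simp [Pi.single_apply]
  · rw [Mon1_eq_companion, charpoly_companion]
    simp [Pi.single_apply, Finset.sum_add_distrib, add_mul]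
    ring
end

section
/- The intersection over t ≥ 0 of the sets M_0^t[Δ] equals the singleton {e_0}; that is, the iterates of the parabolic Mönkemeyer matrix M_0 shrink Δ to the vertex e_0. -/
/-!
The columns of `M₀` are `e₀ ↦ e₀`, `e_j ↦ e_{j+1}` for `1 ≤ j < n`, and `e_n ↦ e₀ + e₁`. Hence the
mass off the vertex, `s(x) = ∑_{i ≥ 1} x_i`, is `M₀`-invariant, while the linear potential
`w(x) = n x₀ + ∑_{i ≥ 1} i x_i` satisfies `w(M₀ x) = w(x) + s(x)`. For `x ∈ Δ` and `y = M₀ᵗ x` this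
gives `t s(y) = t s(x) ≤ w(y) ≤ n ‖y‖₁`, so every point of `M₀ᵗ[Δ]` has `0`-th coordinate at least
`1 - n / t`. As `e₀` is fixed by `M₀`, the intersection is `{e₀}`.
-/

open Matrix

section OrderedField

variable {K : Type*} [Field K] [LinearOrder K] [IsStrictOrderedRing K]

lemma nonpos_of_forall_nat_mul_le [Archimedean K] {a c : K} (h : ∀ t : ℕ, t * a ≤ c) : a ≤ 0 := by
  by_contra! ha
  obtain ⟨t, ht⟩ := exists_nat_gt (c / a)
  exact (h t).not_gt ((div_lt_iff₀ ha).mp ht)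

lemma eq_single_of_mem_stdSimplex_of_one_le {ι : Type*} [Fintype ι] [DecidableEq ι]
    {p : ι → K} {j : ι} (hp : p ∈ stdSimplex K ι) (hj : 1 ≤ p j) : p = Pi.single j 1 := by
  have hsplit := Finset.sum_erase_add _ p (Finset.mem_univ j)
  have hrest : ∑ i ∈ Finset.univ.erase j, p i = 0 := by
    have := Finset.sum_nonneg fun i (_ : i ∈ Finset.univ.erase j) => hp.1 i
    linarith [hp.2]
  ext i
  by_cases hij : i = j
  · subst hij
    rw [Pi.single_eq_same]
    linarith [hp.2]
  · rw [Pi.single_eq_of_ne hij]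
    exact (Finset.sum_eq_zero_iff_of_nonneg fun i _ => hp.1 i).mp hrest i
      (Finset.mem_erase.mpr ⟨hij, Finset.mem_univ i⟩)

end OrderedField

lemma mulVec_nonneg {ι κ R : Type*} [Fintype κ] [Semiring R] [PartialOrder R] [IsOrderedRing R]
    {A : Matrix ι κ R} (hA : ∀ i j, 0 ≤ A i j) {x : κ → R} (hx : 0 ≤ x) : 0 ≤ A *ᵥ x :=
  fun i => dotProduct_nonneg_of_nonneg (fun j => hA i j) hx

section Iteration

variable {ι R : Type*} [Fintype ι] [DecidableEq ι] [Semiring R] {A : Matrix ι ι R}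

lemma vecMul_pow_of_vecMul_eq {s : ι → R} (hs : s ᵥ* A = s) (t : ℕ) : s ᵥ* A ^ t = s := by
  induction t with
  | zero => simp
  | succ t ih => rw [pow_succ, ← vecMul_vecMul, ih, hs]

lemma vecMul_pow_of_vecMul_eq_add {s w : ι → R} (hs : s ᵥ* A = s) (hw : w ᵥ* A = w + s)
    (t : ℕ) : w ᵥ* A ^ t = w + t • s := by
  induction t with
  | zero => simp
  | succ t ih =>
    rw [pow_succ, ← vecMul_vecMul, ih, add_vecMul, hw, smul_vecMul, hs, succ_nsmul', add_assoc]

lemma pow_mulVec_of_mulVec_eq {v : ι → R} (hv : A *ᵥ v = v) (t : ℕ) : A ^ t *ᵥ v = v := by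
  induction t with
  | zero => simp
  | succ t ih => rw [pow_succ, ← mulVec_mulVec, hv, ih]

end Iteration

lemma toR_pow {n : ℕ} (A : MatZ n) (t : ℕ) : toR (A ^ t) = toR A ^ t :=
  Matrix.map_pow A (Int.castRingHom ℝ) t

section ProjectiveAction

variable {n : ℕ} {B : Matrix (Fin (n + 1)) (Fin (n + 1)) ℝ} {x : Fin (n + 1) → ℝ}

lemma projAct_eq_self (hBx : B *ᵥ x = x) (hx : ∑ i, x i = 1) : projAct B x = x := by
  simp [projAct, hBx, hx]

lemma projAct_mem_stdSimplex (hB : ∀ i j, 0 ≤ B i j) (hx : 0 ≤ x)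
    (hpos : 0 < ∑ i, (B *ᵥ x) i) : projAct B x ∈ stdSimplex ℝ (Fin (n + 1)) := by
  refine ⟨fun i => mul_nonneg (inv_nonneg.mpr hpos.le) (mulVec_nonneg hB hx i), ?_⟩
  simp only [projAct, Pi.smul_apply, smul_eq_mul, ← Finset.mul_sum]
  exact inv_mul_cancel₀ hpos.ne'

lemma mem_stdSimplex_and_mul_dotProduct_projAct_le {s w : Fin (n + 1) → ℝ} {c : ℝ} {t : ℕ}
    (hB : ∀ i j, 0 ≤ B i j) (hx : x ∈ stdSimplex ℝ (Fin (n + 1))) (hs0 : 0 ≤ s)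
    (hs : s ᵥ* B = s) (hw : w ᵥ* B = w + t • s) (hw1 : ∀ i, 1 ≤ w i) (hwc : ∀ i, w i ≤ c) :
    projAct B x ∈ stdSimplex ℝ (Fin (n + 1)) ∧ t * (s ⬝ᵥ projAct B x) ≤ c := by
  set y := B *ᵥ x
  have hy : 0 ≤ y := mulVec_nonneg hB hx.1
  have hsy : s ⬝ᵥ y = s ⬝ᵥ x := by rw [dotProduct_mulVec, hs]
  have hwy : w ⬝ᵥ y = w ⬝ᵥ x + t * (s ⬝ᵥ x) := by
    rw [dotProduct_mulVec, hw, add_dotProduct, smul_dotProduct, nsmul_eq_mul]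
  have hwx : 1 ≤ w ⬝ᵥ x := calc
    1 = ∑ i, x i := hx.2.symm
    _ ≤ w ⬝ᵥ x := Finset.sum_le_sum fun i _ => le_mul_of_one_le_left (hx.1 i) (hw1 i)
  have hwy_le : w ⬝ᵥ y ≤ c * ∑ i, y i := by
    rw [Finset.mul_sum]
    exact Finset.sum_le_sum fun i _ => mul_le_mul_of_nonneg_right (hwc i) (hy i)
  have hsx : 0 ≤ s ⬝ᵥ x := dotProduct_nonneg_of_nonneg hs0 hx.1
  have hpos : 0 < ∑ i, y i := by
    refine lt_of_le_of_ne (Finset.sum_nonneg fun i _ => hy i) fun h => ?_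
    rw [← h, mul_zero] at hwy_le
    linarith [mul_nonneg t.cast_nonneg hsx]
  refine ⟨projAct_mem_stdSimplex hB hx.1 hpos, ?_⟩
  rw [projAct, dotProduct_smul, smul_eq_mul, hsy, ← mul_assoc, mul_comm (t : ℝ),
    mul_assoc, inv_mul_le_iff₀ hpos]
  linarith

end ProjectiveAction

lemma Fin.eq_zero_or_eq_last_or_eq_castSucc_succ {m : ℕ} (j : Fin (m + 2)) :
    j = 0 ∨ j = Fin.last (m + 1) ∨ ∃ k : Fin m, j = k.castSucc.succ := by
  induction j using Fin.lastCases with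
  | last => exact .inr (.inl rfl)
  | cast i =>
    induction i using Fin.cases with
    | zero => exact .inl rfl
    | succ k => exact .inr (.inr ⟨k, (Fin.succ_castSucc k).symm⟩)

lemma mon0_apply (n : ℕ) (i j : Fin (n + 1)) :
    Mon0 n i j = Nmat n i (Equiv.swap 0 1 (j + 1)) := by
  simp [Mon0, Matrix.mul_apply, Nmat, Fmat, Rmat]

lemma mon0_nonneg (n : ℕ) (i j : Fin (n + 1)) : 0 ≤ Mon0 n i j := by
  rw [mon0_apply, Nmat, of_apply]
  split_ifs <;> norm_num

section Columns

variable (m : ℕ) (i : Fin (m + 2))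

lemma mon0_apply_zero : Mon0 (m + 1) i 0 = if i = 0 then 1 else 0 := by
  rw [mon0_apply, zero_add, Equiv.swap_apply_right]
  by_cases h : i = 0 <;> simp [Nmat, h]

lemma mon0_apply_last :
    Mon0 (m + 1) i (Fin.last (m + 1)) = (if i = 0 then 1 else 0) + if i = 1 then 1 else 0 := by
  rw [mon0_apply, Fin.last_add_one, Equiv.swap_apply_left]
  by_cases h : i = 0 <;> by_cases h' : i = 1 <;> simp_all [Nmat]

lemma mon0_apply_castSucc_succ (k : Fin m) :
    Mon0 (m + 1) i k.castSucc.succ = if i = k.succ.succ then 1 else 0 := by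
  rw [mon0_apply, Fin.succ_castSucc, Fin.coeSucc_eq_succ,
    Equiv.swap_apply_of_ne_of_ne (Fin.succ_ne_zero _) (Fin.succ_succ_ne_one _)]
  by_cases h : i = k.succ.succ <;> simp [Nmat, h, Fin.succ_succ_ne_one]

end Columns

lemma vecMul_toR_apply {n : ℕ} (v : Fin (n + 1) → ℝ) (A : MatZ n) (j : Fin (n + 1)) :
    (v ᵥ* toR A) j = ∑ i, v i * A i j := by
  simp [vecMul, dotProduct, toR]

-- The solution of `w ᵥ* M₀ = w + s` with `w 1 = 1`; the value `w 0 = n` is forced.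
def mon0Weight (n : ℕ) : Fin (n + 1) → ℝ := fun i => if i = 0 then n else i

section Invariants

variable (m : ℕ)

lemma one_sub_single_zero_vecMul_mon0 :
    (1 - Pi.single 0 1) ᵥ* toR (Mon0 (m + 1)) = 1 - Pi.single 0 1 := by
  ext j
  rcases j.eq_zero_or_eq_last_or_eq_castSucc_succ with rfl | rfl | ⟨k, rfl⟩ <;>
    simp [vecMul_toR_apply, mon0_apply_zero, mon0_apply_last, mon0_apply_castSucc_succ, mul_add,
      Finset.sum_add_distrib, Pi.single_apply, Fin.last_pos.ne']

lemma mon0Weight_vecMul_mon0 :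
    mon0Weight (m + 1) ᵥ* toR (Mon0 (m + 1)) = mon0Weight (m + 1) + (1 - Pi.single 0 1) := by
  ext j
  rcases j.eq_zero_or_eq_last_or_eq_castSucc_succ with rfl | rfl | ⟨k, rfl⟩ <;>
    simp [vecMul_toR_apply, mon0_apply_zero, mon0_apply_last, mon0_apply_castSucc_succ, mul_add,
      Finset.sum_add_distrib, mon0Weight, Fin.last_pos.ne']

lemma toR_mon0_mulVec_single_zero :
    toR (Mon0 (m + 1)) *ᵥ Pi.single 0 1 = Pi.single 0 1 := by
  ext i
  simp [toR, mon0_apply_zero, Pi.single_apply]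

end Invariants

section Bounds

variable (m : ℕ) (i : Fin (m + 2))

lemma one_le_mon0Weight : 1 ≤ mon0Weight (m + 1) i := by
  by_cases h : i = 0
  · simp [mon0Weight, h]
  · simp [mon0Weight, h, Nat.one_le_iff_ne_zero]

lemma mon0Weight_le : mon0Weight (m + 1) i ≤ m + 1 := by
  by_cases h : i = 0
  · simp [mon0Weight, h]
  · simp only [mon0Weight, h, if_false]
    exact_mod_cast Nat.le_of_lt_succ i.isLt

end Bounds

lemma single_zero_mem_simg_mon0_pow (m t : ℕ) : Pi.single 0 1 ∈ simg (Mon0 (m + 1) ^ t) := by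
  refine ⟨Pi.single 0 1, single_mem_stdSimplex ℝ 0, projAct_eq_self ?_ (by simp)⟩
  rw [toR_pow]
  exact pow_mulVec_of_mulVec_eq (toR_mon0_mulVec_single_zero m) t

lemma mem_stdSimplex_and_mul_le_of_mem_simg_mon0_pow {m t : ℕ} {p : Fin (m + 2) → ℝ}
    (hp : p ∈ simg (Mon0 (m + 1) ^ t)) :
    p ∈ stdSimplex ℝ (Fin (m + 2)) ∧ t * (1 - p 0) ≤ m + 1 := by
  obtain ⟨x, hx, rfl⟩ := hp
  have hnonneg : ∀ i j, 0 ≤ toR (Mon0 (m + 1)) i j := fun i j => by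
    simpa [toR] using mon0_nonneg (m + 1) i j
  have hs0 : (0 : Fin (m + 2) → ℝ) ≤ 1 - Pi.single 0 1 := fun i => by
    by_cases h : i = 0 <;> simp [h]
  have hs := one_sub_single_zero_vecMul_mon0 m
  rw [toR_pow]
  obtain ⟨hmem, hle⟩ := mem_stdSimplex_and_mul_dotProduct_projAct_le (pow_apply_nonneg hnonneg t)
    hx hs0 (vecMul_pow_of_vecMul_eq hs t)
    (vecMul_pow_of_vecMul_eq_add hs (mon0Weight_vecMul_mon0 m) t) (one_le_mon0Weight m)
    (mon0Weight_le m)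
  refine ⟨hmem, ?_⟩
  rwa [sub_dotProduct, one_dotProduct, single_dotProduct, hmem.2, one_mul] at hle

theorem stmt18 (n : ℕ) (hn : 1 ≤ n) :
    (⋂ t : ℕ, simg ((Mon0 n) ^ t)) = {Pi.single (0 : Fin (n + 1)) (1 : ℝ)} := by
  obtain ⟨m, rfl⟩ := Nat.exists_eq_add_of_le' hn
  refine Set.eq_singleton_iff_unique_mem.mpr
    ⟨Set.mem_iInter.mpr (single_zero_mem_simg_mon0_pow m), fun p hp => ?_⟩
  have hbound t := mem_stdSimplex_and_mul_le_of_mem_simg_mon0_pow (Set.mem_iInter.mp hp t)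
  refine eq_single_of_mem_stdSimplex_of_one_le (hbound 0).1 ?_
  linarith [nonpos_of_forall_nat_mul_le fun t => (hbound t).2]
end
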